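/- Let $t \ge 2n$ and let $\mathcal{F}$ be a collection of $n$ independent $n$-sets of the cycle $C_t$ (vertices labeled by $\mathbb{Z}_t$) such that $(\mathcal{F}, C_t)$ has no rainbow independent $n$-set. If some vertex $i$ lies in exactly one member $I$ of $\mathcal{F}$, then both $i-2$ and $i+2$ (indices mod $t$) belong to $I$. -/

import Mathlib

open Finset

/-- A set of vertices is independent: no two of its members are adjacent. -/
def IsIndep {V : Type*} (G : SimpleGraph V) (S : Set V) : Prop :=
  ∀ a ∈ S, ∀ b ∈ S, ¬ G.Adj a b

/-- `(F, G)` admits a rainbow independent `m`-set: `m` distinct vertices chosen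
from `m` distinct members of `F` (one vertex per member) forming an independent set. -/
def RainbowIndep {V : Type*} [DecidableEq V] (G : SimpleGraph V) {k : ℕ}
    (F : Fin k → Finset V) (m : ℕ) : Prop :=
  ∃ (s : Finset (Fin k)) (x : Fin k → V),
    s.card = m ∧ (∀ i ∈ s, x i ∈ F i) ∧ (s.image x).card = m ∧
    IsIndep G (s.image x : Set V)

/-- The cycle `C_t` with vertex set `ZMod t`, consecutive residues adjacent. -/
def cyc (t : ℕ) : SimpleGraph (ZMod t) :=
  SimpleGraph.fromRel (fun a b => b = a + 1)


/-!
Suppose `i + 2 ∉ I`. Give the vertex `v = i + 1` to a member containing it (if there is one) and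
delete the closed neighbourhood `{i, i + 1, i + 2}` of `v` from every other member: `I` loses only
`i`, and any other member misses `i` and, being independent, loses at most one of `i + 1, i + 2`.
The remaining `n - 1` (or, if `v` is uncovered, `n`) sets avoid `v`, and cutting `C_t` at `v`
leaves a path. On a path, `k` independent sets of size at least `k` always have a rainbow
independent set: give the leftmost vertex in play to a set containing it, delete it and its right
neighbour from the other sets, and recurse. The case `i - 2` is the mirror image, with `v = i - 1`.
-/

open SimpleGraph

variable {ι V W : Type*}

lemma IsIndep.mono {G : SimpleGraph V} {S T : Set V} (h : IsIndep G T) (hST : S ⊆ T) :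
    IsIndep G S :=
  fun a ha b hb => h a (hST ha) b (hST hb)

def IsRainbowIndepChoice (G : SimpleGraph V) (S : ι → Finset V) (s : Finset ι) (x : ι → V) :
    Prop :=
  (∀ j ∈ s, x j ∈ S j) ∧ Set.InjOn x s ∧ ∀ j ∈ s, ∀ j' ∈ s, ¬ G.Adj (x j) (x j')

lemma IsRainbowIndepChoice.rainbowIndep [DecidableEq V] {G : SimpleGraph V} {k : ℕ}
    {F : Fin k → Finset V} {s : Finset (Fin k)} {x : Fin k → V}
    (hx : IsRainbowIndepChoice G F s x) : RainbowIndep G F #s := by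
  obtain ⟨hmem, hinj, hadj⟩ := hx
  refine ⟨s, x, rfl, hmem, card_image_of_injOn hinj, ?_⟩
  rw [coe_image]
  rintro _ ⟨j, hj, rfl⟩ _ ⟨j', hj', rfl⟩
  exact hadj j hj j' hj'

open Classical in
noncomputable def deleteClosedNbhd (G : SimpleGraph V) (v : V) (S : Finset V) : Finset V :=
  {u ∈ S | u ≠ v ∧ ¬ G.Adj v u}

section deleteClosedNbhd

variable {G : SimpleGraph V} {v u : V} {S : Finset V}

@[simp]
lemma mem_deleteClosedNbhd : u ∈ deleteClosedNbhd G v S ↔ u ∈ S ∧ u ≠ v ∧ ¬ G.Adj v u := by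
  simp [deleteClosedNbhd]

lemma deleteClosedNbhd_subset : deleteClosedNbhd G v S ⊆ S :=
  fun _ hu => (mem_deleteClosedNbhd.1 hu).1

open Classical in
lemma card_le_card_deleteClosedNbhd_add_one
    (h : ∀ a ∈ S, ∀ b ∈ S, (a = v ∨ G.Adj v a) → (b = v ∨ G.Adj v b) → a = b) :
    #S ≤ #(deleteClosedNbhd G v S) + 1 := by
  have hnbhd : #(S.filter fun u => ¬ (u ≠ v ∧ ¬ G.Adj v u)) ≤ 1 := by
    refine card_le_one.2 fun a ha b hb => ?_
    simp only [mem_filter, not_and_or, not_not, ne_eq] at ha hb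
    exact h a ha.1 b hb.1 ha.2 hb.2
  rw [← card_filter_add_card_filter_not fun u => u ≠ v ∧ ¬ G.Adj v u]
  exact Nat.add_le_add_left hnbhd _

end deleteClosedNbhd

lemma IsRainbowIndepChoice.update [DecidableEq ι] {G : SimpleGraph V} {S : ι → Finset V}
    {s : Finset ι} {x : ι → V} {j : ι} {v : V}
    (hx : IsRainbowIndepChoice G (fun k => deleteClosedNbhd G v (S k)) s x)
    (hv : v ∈ S j) : IsRainbowIndepChoice G S (insert j s) (Function.update x j v) := by
  obtain ⟨hmem, hinj, hadj⟩ := hx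
  simp only [mem_deleteClosedNbhd] at hmem
  have hs : ∀ {k}, k ∈ insert j s → k ≠ j → k ∈ s := fun hk hkj =>
    (mem_insert.1 hk).resolve_left hkj
  refine ⟨fun k hk => ?_, fun a ha b hb hab => ?_, fun a ha b hb => ?_⟩
  · by_cases hkj : k = j
    · simpa [hkj] using hv
    · simpa [hkj] using (hmem k (hs hk hkj)).1
  · simp only [Function.update_apply] at hab
    split_ifs at hab with haj hbj hbj
    · rw [haj, hbj]
    · exact absurd hab.symm (hmem b (hs hb hbj)).2.1
    · exact absurd hab (hmem a (hs ha haj)).2.1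
    · exact hinj (hs ha haj) (hs hb hbj) hab
  · simp only [Function.update_apply]
    split_ifs with haj hbj hbj
    · exact G.loopless.irrefl v
    · exact (hmem b (hs hb hbj)).2.2
    · exact fun h => (hmem a (hs ha haj)).2.2 h.symm
    · exact hadj a (hs ha haj) b (hs hb hbj)

lemma hasse_nat_adj {a b : ℕ} : (hasse ℕ).Adj a b ↔ a + 1 = b ∨ b + 1 = a := by
  simp [hasse_adj]

theorem exists_isRainbowIndepChoice_hasse_nat [DecidableEq ι] (s : Finset ι) (S : ι → Finset ℕ)
    (hcard : ∀ j ∈ s, #s ≤ #(S j)) (hind : ∀ j ∈ s, IsIndep (hasse ℕ) (S j)) :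
    ∃ x, IsRainbowIndepChoice (hasse ℕ) S s x := by
  induction s using Finset.strongInduction generalizing S with
  | H s ih =>
  rcases s.eq_empty_or_nonempty with rfl | ⟨j₀, hj₀⟩
  · exact ⟨fun _ => 0, by simp [IsRainbowIndepChoice]⟩
  have hne : (s.biUnion S).Nonempty := by
    obtain ⟨a, ha⟩ := card_pos.1 ((card_pos.2 ⟨j₀, hj₀⟩).trans_le (hcard j₀ hj₀))
    exact ⟨a, mem_biUnion.2 ⟨j₀, hj₀, ha⟩⟩
  set m := (s.biUnion S).min' hne
  have hm : ∀ j ∈ s, ∀ a ∈ S j, m ≤ a := fun j hj a ha =>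
    min'_le _ _ (mem_biUnion.2 ⟨j, hj, ha⟩)
  obtain ⟨j, hj, hmj⟩ := mem_biUnion.1 ((s.biUnion S).min'_mem hne)
  -- As `m` is the least vertex in play, `S k` meets its closed neighbourhood only in `{m, m + 1}`,
  -- hence at most once.
  have hcard' : ∀ k ∈ s.erase j, #(s.erase j) ≤ #(deleteClosedNbhd (hasse ℕ) m (S k)) := by
    intro k hk
    have hks := mem_of_mem_erase hk
    have hmeet := card_le_card_deleteClosedNbhd_add_one (G := hasse ℕ) (v := m) (S := S k)
      fun a ha b hb ham hbm => by
        have hab := hind k hks a ha b hb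
        have hba := hind k hks b hb a ha
        have := hm k hks a ha
        have := hm k hks b hb
        simp only [hasse_nat_adj] at hab hba ham hbm
        omega
    rw [card_erase_of_mem hj]
    have := hcard k hks
    omega
  obtain ⟨x, hx⟩ := ih (s.erase j) (erase_ssubset hj) _ hcard'
    fun k hk => (hind k (mem_of_mem_erase hk)).mono deleteClosedNbhd_subset
  exact ⟨_, insert_erase hj ▸ hx.update hmj⟩

theorem IsRainbowIndepChoice.exists_of_image [Nonempty V] [DecidableEq W] {G : SimpleGraph V}
    {H : SimpleGraph W} {f : V → W} {U : Set V}
    (hf : ∀ u ∈ U, ∀ u' ∈ U, G.Adj u u' → H.Adj (f u) (f u')) {S : ι → Finset V}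
    {s : Finset ι} (hSU : ∀ j ∈ s, ↑(S j) ⊆ U) {y : ι → W}
    (hy : IsRainbowIndepChoice H (fun j => (S j).image f) s y) :
    ∃ x, IsRainbowIndepChoice G S s x := by
  obtain ⟨hmem, hinj, hadj⟩ := hy
  have hpre : ∀ j ∈ s, ∃ u ∈ S j, f u = y j := fun j hj => mem_image.1 (hmem j hj)
  choose! x hxS hxy using hpre
  refine ⟨x, hxS, fun a ha b hb hab => hinj ha hb ?_, fun a ha b hb hGab => ?_⟩
  · rw [← hxy a ha, ← hxy b hb, hab]
  · refine hadj a ha b hb ?_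
    rw [← hxy a ha, ← hxy b hb]
    exact hf _ (hSU a ha (hxS a ha)) _ (hSU b hb (hxS b hb)) hGab

lemma cyc_adj {t : ℕ} {a b : ZMod t} : (cyc t).Adj a b ↔ a ≠ b ∧ (b = a + 1 ∨ a = b + 1) :=
  SimpleGraph.fromRel_adj _ a b

lemma cyc_adj_of_eq_add_one {t : ℕ} [Nontrivial (ZMod t)] {a b : ZMod t} (h : b = a + 1) :
    (cyc t).Adj a b :=
  cyc_adj.2 ⟨fun hab => one_ne_zero (by linear_combination -h - hab), Or.inl h⟩

lemma eq_add_one_or_eq_sub_one_of_cyc_adj {t : ℕ} {a b : ZMod t} (h : (cyc t).Adj a b) :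
    b = a + 1 ∨ b = a - 1 := by
  rcases (cyc_adj.1 h).2 with h | h
  · exact Or.inl h
  · exact Or.inr (by linear_combination -h)

section cut

variable {t : ℕ} [NeZero t]

lemma ZMod.val_sub_add_one_eq_iff {c z z' : ZMod t} (hz' : z' ≠ c) :
    (z - c).val + 1 = (z' - c).val ↔ z' = z + 1 := by
  constructor
  · intro h
    have := congrArg (Nat.cast : ℕ → ZMod t) h
    push_cast [ZMod.natCast_zmod_val] at this
    linear_combination -this
  · rintro rfl
    have hlt : (z - c).val + 1 < t := by
      refine lt_of_le_of_ne (ZMod.val_lt _) fun h => hz' ?_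
      have := congrArg (Nat.cast : ℕ → ZMod t) h
      push_cast [ZMod.natCast_zmod_val, ZMod.natCast_self] at this
      linear_combination this
    rw [← ZMod.val_cast_of_lt hlt]
    push_cast [ZMod.natCast_zmod_val]
    ring_nf

lemma hasse_adj_val_sub_iff {c z z' : ZMod t} (hz : z ≠ c) (hz' : z' ≠ c) :
    (hasse ℕ).Adj (z - c).val (z' - c).val ↔ (cyc t).Adj z z' := by
  rw [hasse_nat_adj, cyc_adj]
  refine ⟨fun h => ⟨by rintro rfl; omega, ?_⟩, fun h => ?_⟩
  · rwa [ZMod.val_sub_add_one_eq_iff hz', ZMod.val_sub_add_one_eq_iff hz] at h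
  · rw [ZMod.val_sub_add_one_eq_iff hz', ZMod.val_sub_add_one_eq_iff hz]
    exact h.2

theorem exists_isRainbowIndepChoice_cyc [DecidableEq ι] (c : ZMod t) (s : Finset ι)
    (S : ι → Finset (ZMod t)) (hc : ∀ j ∈ s, c ∉ S j) (hcard : ∀ j ∈ s, #s ≤ #(S j))
    (hind : ∀ j ∈ s, IsIndep (cyc t) (S j)) : ∃ x, IsRainbowIndepChoice (cyc t) S s x := by
  set ℓ : ZMod t → ℕ := fun z => (z - c).val
  have hℓ : Function.Injective ℓ := (ZMod.val_injective t).comp (sub_left_injective (b := c))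
  have hSc : ∀ j ∈ s, ↑(S j) ⊆ ({c}ᶜ : Set (ZMod t)) := fun j hj u hu hcu =>
    hc j hj (by rwa [← Set.mem_singleton_iff.1 hcu])
  obtain ⟨y, hy⟩ := exists_isRainbowIndepChoice_hasse_nat s (fun j => (S j).image ℓ)
    (fun j hj => by simpa [card_image_of_injective _ hℓ] using hcard j hj) fun j hj => by
      rw [coe_image]
      rintro _ ⟨u, hu, rfl⟩ _ ⟨u', hu', rfl⟩ h
      exact hind j hj u hu u' hu' <| (hasse_adj_val_sub_iff (hSc j hj hu) (hSc j hj hu')).1 h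
  exact hy.exists_of_image (fun u hu u' hu' => (hasse_adj_val_sub_iff hu hu').2) hSc

end cut

theorem mem_of_not_rainbowIndep_cyc {n t : ℕ} [NeZero t] {F : Fin n → Finset (ZMod t)}
    (hcard : ∀ j, n ≤ #(F j)) (hind : ∀ j, IsIndep (cyc t) (F j))
    (hno : ¬ RainbowIndep (cyc t) F n) {i v w : ZMod t} {i₀ : Fin n}
    (huniq : ∀ j, i ∈ F j ↔ j = i₀) (hiv : (cyc t).Adj i v) (hvw : (cyc t).Adj v w)
    (hv : ∀ u, (cyc t).Adj v u → u = i ∨ u = w) : w ∈ F i₀ := by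
  by_contra hw
  have hiI : i ∈ F i₀ := (huniq i₀).2 rfl
  have hvI : v ∉ F i₀ := fun h => hind i₀ i hiI v h hiv
  -- `F i₀` meets the closed neighbourhood `{i, v, w}` only in `i`, any other member misses `i`
  -- and, being independent, cannot contain both `v` and `w`.
  have hmeet : ∀ k, #(F k) ≤ #(deleteClosedNbhd (cyc t) v (F k)) + 1 := fun k =>
    card_le_card_deleteClosedNbhd_add_one fun a ha b hb hav hbv => by
      have hN : ∀ u, u = v ∨ (cyc t).Adj v u → u = v ∨ u = i ∨ u = w := fun u hu =>
        hu.imp_right (hv u)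
      rcases hN a hav with rfl | rfl | rfl <;> rcases hN b hbv with rfl | rfl | rfl
      all_goals first
        | rfl
        | exact absurd hvw (hind k _ ha _ hb)
        | exact absurd hvw (hind k _ hb _ ha)
        | grind
  suffices ∃ x, IsRainbowIndepChoice (cyc t) F univ x by
    obtain ⟨x, hx⟩ := this
    exact hno (by simpa using hx.rainbowIndep)
  by_cases hcov : ∃ j, v ∈ F j
  · obtain ⟨j, hj⟩ := hcov
    obtain ⟨x, hx⟩ := exists_isRainbowIndepChoice_cyc v (univ.erase j)
      (fun k => deleteClosedNbhd (cyc t) v (F k)) (by simp)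
      (fun k _ => by have := hmeet k; have := hcard k; simp; omega)
      fun k _ => (hind k).mono deleteClosedNbhd_subset
    exact ⟨_, insert_erase (mem_univ j) ▸ hx.update hj⟩
  · push Not at hcov
    exact exists_isRainbowIndepChoice_cyc v univ F (fun k _ => hcov k) (by simpa using hcard)
      fun k _ => hind k

/-- If `t ≥ 2n`, `n` independent `n`-sets of `C_t` have no rainbow independent `n`-set,
and vertex `i` lies in exactly one member `F i₀`, then `i - 2, i + 2 ∈ F i₀`. -/
theorem stmt4 (n t : ℕ) (ht : 2 * n ≤ t)
    (F : Fin n → Finset (ZMod t))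
    (hF : ∀ i, (F i).card = n ∧ IsIndep (cyc t) (F i : Set (ZMod t)))
    (hno : ¬ RainbowIndep (cyc t) F n)
    (i : ZMod t) (i₀ : Fin n) (huniq : ∀ j, i ∈ F j ↔ j = i₀) :
    i - 2 ∈ F i₀ ∧ i + 2 ∈ F i₀ := by
  have : Fact (1 < t) := ⟨by have := i₀.pos; omega⟩
  have hcard : ∀ j, n ≤ #(F j) := fun j => (hF j).1.ge
  have hind : ∀ j, IsIndep (cyc t) (F j) := fun j => (hF j).2
  constructor
  · refine mem_of_not_rainbowIndep_cyc hcard hind hno huniq (v := i - 1) ?_ ?_ fun u hu => ?_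
    · exact (cyc_adj_of_eq_add_one (by ring)).symm
    · exact (cyc_adj_of_eq_add_one (by ring)).symm
    · rcases eq_add_one_or_eq_sub_one_of_cyc_adj hu with rfl | rfl
      · left; ring
      · right; ring
  · refine mem_of_not_rainbowIndep_cyc hcard hind hno huniq (v := i + 1)
      (cyc_adj_of_eq_add_one rfl) (cyc_adj_of_eq_add_one (by ring)) fun u hu => ?_
    · rcases eq_add_one_or_eq_sub_one_of_cyc_adj hu with rfl | rfl
      · right; ring
      · left; ring
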